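/- arXiv:2204.14080 — 2 statements merged into one kernel-verified Lean document; each statement's English description precedes it below -/
import Mathlib

section
/- Let Γ be an even Artin graph with Artin group G, g, h ∈ G, and A ⊆ V. If gG_Ag^{-1} ⊆ hG_Ah^{-1}, then gG_Ag^{-1} = hG_Ah^{-1}. -/
/-- An Artin graph: a simplicial graph with even/arbitrary labels; `m u v = 0`
means `u` and `v` are not joined by an edge, otherwise `m u v ≥ 2` is the label. -/
structure ArtinGraph (V : Type) where
  m : V → V → ℕ
  symm : ∀ u v, m u v = m v u
  loopless : ∀ v, m v v = 0
  ne_one : ∀ u v, m u v ≠ 1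

namespace ArtinGraph

variable {V : Type}

/-- `word u v n` is the prefix of length `n` of the alternating word `uvuv…`. -/
def word : V → V → ℕ → FreeGroup V
  | _, _, 0 => 1
  | u, v, n + 1 => FreeGroup.of u * word v u n

/-- The Artin relations of the graph. -/
def rels (Γ : ArtinGraph V) : Set (FreeGroup V) :=
  {r | ∃ u v, Γ.m u v ≠ 0 ∧ r = word u v (Γ.m u v) * (word v u (Γ.m u v))⁻¹}

/-- The Artin group of an Artin graph. -/
def ArtinGroup (Γ : ArtinGraph V) : Type := PresentedGroup Γ.rels

instance (Γ : ArtinGraph V) : Group Γ.ArtinGroup :=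
  inferInstanceAs (Group (PresentedGroup Γ.rels))

/-- The generator of the Artin group corresponding to a vertex. -/
def gen (Γ : ArtinGraph V) (v : V) : Γ.ArtinGroup := PresentedGroup.of v

/-- The standard parabolic subgroup on a set `S` of vertices. -/
def std (Γ : ArtinGraph V) (S : Set V) : Subgroup Γ.ArtinGroup :=
  Subgroup.closure (Γ.gen '' S)

/-- The conjugate `g H g⁻¹` of a subgroup. -/
def conjP {G : Type*} [Group G] (g : G) (H : Subgroup G) : Subgroup G :=
  H.map (MulAut.conj g).toMonoidHom

/-- A parabolic subgroup is a conjugate of a standard parabolic subgroup. -/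
def IsParabolic (Γ : ArtinGraph V) (P : Subgroup Γ.ArtinGroup) : Prop :=
  ∃ (S : Set V) (g : Γ.ArtinGroup), P = conjP g (Γ.std S)

/-- An Artin graph is even if all labels are even. -/
def IsEven (Γ : ArtinGraph V) : Prop := ∀ u v, Even (Γ.m u v)

/-- The FC condition for even Artin graphs: in every triangle at least two of
the three labels are equal to `2`. -/
def IsFC (Γ : ArtinGraph V) : Prop :=
  ∀ u v w, Γ.m u v ≠ 0 → Γ.m v w ≠ 0 → Γ.m w u ≠ 0 →
    (Γ.m u v = 2 ∧ Γ.m v w = 2) ∨ (Γ.m v w = 2 ∧ Γ.m w u = 2) ∨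
      (Γ.m u v = 2 ∧ Γ.m w u = 2)

/-- The link of a vertex. -/
def lk (Γ : ArtinGraph V) (x : V) : Set V := {u | Γ.m x u ≠ 0}

/-- The star of a vertex. -/
def star (Γ : ArtinGraph V) (x : V) : Set V := insert x (Γ.lk x)

end ArtinGraph

/-!
Conjugating by `k = h⁻¹ g` reduces the claim to: `k G_A k⁻¹ ≤ G_A` implies equality.
Evenness of the labels makes the vertex-killing map `ρ_A` a well-defined retraction of `G`
onto `G_A`. Applying `ρ_A` to `k a k⁻¹ ∈ G_A` for `a ∈ G_A` gives
`k a k⁻¹ = ρ_A(k) a ρ_A(k)⁻¹`, so `k G_A k⁻¹` is the conjugate of `G_A` by the element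
`ρ_A(k)` of `G_A`, which is `G_A` itself.
-/

namespace ArtinGraph

section Conjugation

variable {G : Type*} [Group G]

theorem mem_conjP {g x : G} {H : Subgroup G} : x ∈ conjP g H ↔ g⁻¹ * x * g ∈ H := by
  constructor
  · rintro ⟨y, hy, rfl⟩
    simpa [mul_assoc] using hy
  · intro hx
    exact ⟨g⁻¹ * x * g, hx, by simp [mul_assoc]⟩

theorem conjP_conjP (g h : G) (H : Subgroup G) : conjP g (conjP h H) = conjP (g * h) H := by
  ext x
  simp [mem_conjP, mul_assoc]

theorem conjP_of_mem {g : G} {H : Subgroup G} (hg : g ∈ H) : conjP g H = H := by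
  ext x
  rw [mem_conjP]
  refine ⟨fun hx => ?_, fun hx => H.mul_mem (H.mul_mem (H.inv_mem hg) hx) hg⟩
  simpa [mul_assoc] using H.mul_mem (H.mul_mem hg hx) (H.inv_mem hg)

theorem conjP_eq_self_of_le_of_retraction {H : Subgroup G} (ρ : G →* G)
    (hρH : ∀ x, ρ x ∈ H) (hρ : ∀ x ∈ H, ρ x = x) {k : G} (hk : conjP k H ≤ H) :
    conjP k H = H := by
  have hconj : ∀ x ∈ H, k * x * k⁻¹ = ρ k * x * (ρ k)⁻¹ := by
    intro x hx
    have hkx : k * x * k⁻¹ ∈ H := hk ⟨x, hx, rfl⟩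
    rw [← hρ _ hkx, map_mul, map_mul, map_inv, hρ x hx]
  calc conjP k H = conjP (ρ k) H :=
        SetLike.coe_injective (Set.image_congr hconj)
    _ = H := conjP_of_mem (hρH k)

theorem conjP_eq_of_le_of_retraction {H : Subgroup G} (ρ : G →* G)
    (hρH : ∀ x, ρ x ∈ H) (hρ : ∀ x ∈ H, ρ x = x) {g h : G}
    (hle : conjP g H ≤ conjP h H) : conjP g H = conjP h H := by
  have hk : conjP h⁻¹ (conjP g H) ≤ conjP h⁻¹ (conjP h H) := Subgroup.map_mono hle
  rw [conjP_conjP, conjP_conjP, inv_mul_cancel, conjP_of_mem H.one_mem] at hk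
  calc conjP g H = conjP h (conjP (h⁻¹ * g) H) := by rw [conjP_conjP, mul_inv_cancel_left]
    _ = conjP h H := by rw [conjP_eq_self_of_le_of_retraction ρ hρH hρ hk]

end Conjugation

variable {V : Type}

theorem map_word_two_mul {G : Type*} [Group G] (φ : FreeGroup V →* G) (u v : V) (n : ℕ) :
    φ (word u v (2 * n)) = (φ (.of u) * φ (.of v)) ^ n := by
  induction n generalizing u v with
  | zero => simp [word]
  | succ n ih =>
    rw [show 2 * (n + 1) = 2 * n + 1 + 1 by ring]
    simp only [word, map_mul, ih, pow_succ']
    group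

theorem gen_mul_gen_pow_eq (Γ : ArtinGraph V) {u v : V} {n : ℕ} (hm : Γ.m u v = 2 * n) :
    (Γ.gen u * Γ.gen v) ^ n = (Γ.gen v * Γ.gen u) ^ n := by
  rcases eq_or_ne n 0 with rfl | hn
  · simp
  have hrel : PresentedGroup.mk Γ.rels (word u v (Γ.m u v)) =
      PresentedGroup.mk Γ.rels (word v u (Γ.m u v)) := by
    rw [← mul_inv_eq_one, ← map_inv, ← map_mul]
    exact (QuotientGroup.eq_one_iff _).2
      (Subgroup.subset_normalClosure ⟨u, v, by omega, rfl⟩)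
  rwa [hm, map_word_two_mul, map_word_two_mul] at hrel

theorem lift_eq_one_of_mem_rels {Γ : ArtinGraph V} (hEven : Γ.IsEven) {G : Type*} [Group G]
    {f : V → G} (hf : ∀ u v n, Γ.m u v = 2 * n → (f u * f v) ^ n = (f v * f u) ^ n)
    {r : FreeGroup V} (hr : r ∈ Γ.rels) : FreeGroup.lift f r = 1 := by
  obtain ⟨u, v, -, rfl⟩ := hr
  obtain ⟨n, hn⟩ := hEven u v
  have hm : Γ.m u v = 2 * n := by omega
  rw [map_mul, map_inv, mul_inv_eq_one, hm, map_word_two_mul, map_word_two_mul]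
  simpa using hf u v n hm

open Classical in
noncomputable def retraction (Γ : ArtinGraph V) (hEven : Γ.IsEven) (A : Set V) :
    Γ.ArtinGroup →* Γ.ArtinGroup :=
  PresentedGroup.toGroup (f := fun v => if v ∈ A then Γ.gen v else 1) fun _ =>
    lift_eq_one_of_mem_rels hEven fun u v _ hm => by
      by_cases hu : u ∈ A <;> by_cases hv : v ∈ A <;> simp [hu, hv, Γ.gen_mul_gen_pow_eq hm]

variable {Γ : ArtinGraph V} (hEven : Γ.IsEven) (A : Set V)

open Classical in
theorem retraction_gen (v : V) :
    Γ.retraction hEven A (Γ.gen v) = if v ∈ A then Γ.gen v else 1 :=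
  PresentedGroup.toGroup.of _

theorem retraction_mem_std (x : Γ.ArtinGroup) : Γ.retraction hEven A x ∈ Γ.std A := by
  refine PresentedGroup.generated_by Γ.rels ((Γ.std A).comap (Γ.retraction hEven A))
    (fun v => ?_) x
  change Γ.retraction hEven A (Γ.gen v) ∈ Γ.std A
  rw [retraction_gen]
  split_ifs with hv
  · exact Subgroup.subset_closure ⟨v, hv, rfl⟩
  · exact one_mem _

theorem retraction_of_mem_std {x : Γ.ArtinGroup} (hx : x ∈ Γ.std A) :
    Γ.retraction hEven A x = x := by
  induction hx using Subgroup.closure_induction with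
  | mem _ hx =>
    obtain ⟨v, hv, rfl⟩ := hx
    rw [retraction_gen, if_pos hv]
  | one => exact map_one _
  | mul _ _ _ _ hx hy => rw [map_mul, hx, hy]
  | inv _ _ hx => rw [map_inv, hx]

end ArtinGraph

open ArtinGraph in
/-- in an even Artin group, `gG_Ag⁻¹ ⊆ hG_Ah⁻¹` implies equality. -/
theorem stmt4 {V : Type} (Γ : ArtinGraph V) (hEven : Γ.IsEven) (A : Set V)
    (g h : Γ.ArtinGroup) (hle : conjP g (Γ.std A) ≤ conjP h (Γ.std A)) :
    conjP g (Γ.std A) = conjP h (Γ.std A) :=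
  conjP_eq_of_le_of_retraction (Γ.retraction hEven A) (retraction_mem_std hEven A)
    (fun _ => retraction_of_mem_std hEven A) hle
end

section
/- Let Γ be an even FC-type Artin graph, x ∈ V a vertex with st(x) = V, and ρ_x : G_Γ → ⟨x⟩ ≅ ℤ the retraction onto x. Then ker ρ_x is isomorphic to the Artin group G_Δ, where Δ has vertex set {(u,i) : u ∈ lk(x), 0 ≤ i ≤ m_{u,x}/2 − 1}, an edge between (u,i) and (v,j) (for u ≠ v) whenever {u,v} ∈ E, with label m_{u,v}; the isomorphism sends (v,n) to x^n v x^{-n}. -/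
open scoped Classical in
open ArtinGraph in
/-- The Artin graph `Δ` with vertices `(u, i)`, `u ∈ lk(x)`, `0 ≤ i < m_{u,x}/2`,
an edge between `(u,i)` and `(v,j)` (for `u ≠ v`) whenever `{u,v} ∈ E`, with the
same label `m_{u,v}`. -/
noncomputable def lkGraph {V : Type} (Γ : ArtinGraph V) (x : V) :
    ArtinGraph {p : V × ℕ // Γ.m p.1 x ≠ 0 ∧ p.2 < Γ.m p.1 x / 2} where
  m p q := if p.val.1 = q.val.1 then 0 else Γ.m p.val.1 q.val.1
  symm p q := by
    try dsimp only
    by_cases h : p.val.1 = q.val.1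
    · rw [if_pos h, if_pos h.symm]
    · rw [if_neg h, if_neg (fun hh => h hh.symm)]
      exact Γ.symm _ _
  loopless p := by simp
  ne_one p q := by
    try dsimp only
    split
    · simp
    · exact Γ.ne_one _ _



/-!
Write `k_v = m_{v,x} / 2` and `t` for the generator of `ℤ`. Conjugation by `x` shifts each
column `(v, 0), …, (v, k_v - 1)` of `Δ` up by one, except at the top: the braid relation
`(v x) ^ k_v = (x v) ^ k_v` says that `x` commutes with `c_v = ∏_{i < k_v} xⁱ v x⁻ⁱ`, whence
`x ^ k_v v x ^ (-k_v) = c_v⁻¹ v c_v`. This defines an automorphism `σ` of `G_Δ` (the FC condition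
keeps the relations of `Δ` to commutations and to braids between columns of height one), and
`x ↦ t`, `v ↦ (v, 0)` is an isomorphism `G_Γ ≅ G_Δ ⋊_σ ℤ` — the Reidemeister–Schreier
decomposition for the transversal `{xⁱ}` — with inverse `(v, n) ↦ xⁿ v x⁻ⁿ`, `t ↦ x`.
Under it `ρ_x` becomes the projection to `ℤ`, whose kernel is `G_Δ`.
-/

section AlternatingProducts

variable {G : Type*} [Group G]

def altProd (a b : G) : ℕ → G
  | 0 => 1
  | n + 1 => a * altProd b a n

lemma altProd_two_mul (a b : G) (k : ℕ) : altProd a b (2 * k) = (a * b) ^ k := by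
  induction k generalizing a b with
  | zero => simp [altProd]
  | succ k ih =>
    rw [show 2 * (k + 1) = 2 * k + 1 + 1 by ring, altProd, altProd, ih, pow_succ']
    group

lemma altProd_eq_altProd_of_even {a b : G} {n : ℕ} (hn : Even n)
    (h : (a * b) ^ (n / 2) = (b * a) ^ (n / 2)) : altProd a b n = altProd b a n := by
  obtain ⟨k, rfl⟩ := hn
  rw [← two_mul, Nat.mul_div_cancel_left k two_pos] at *
  rw [altProd_two_mul, altProd_two_mul, h]

def conjProd (a b : G) : ℕ → G
  | 0 => 1
  | k + 1 => conjProd a b k * (a ^ k * b * (a ^ k)⁻¹)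

lemma conjProd_succ' (a b : G) (k : ℕ) :
    conjProd a b (k + 1) = b * (a * conjProd a b k * a⁻¹) := by
  induction k with
  | zero => simp [conjProd]
  | succ k ih =>
    simp only [conjProd] at ih ⊢
    conv_lhs => rw [ih]
    group

lemma mul_pow_eq_conjProd_mul_pow (a b : G) (k : ℕ) :
    (b * a) ^ k = conjProd a b k * a ^ k := by
  induction k with
  | zero => simp [conjProd]
  | succ k ih =>
    rw [pow_succ', ih, conjProd_succ', pow_succ']
    group

lemma mul_pow_comm_iff_commute_conjProd (a b : G) (k : ℕ) :
    (b * a) ^ k = (a * b) ^ k ↔ Commute a (conjProd a b k) := by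
  have hab : (a * b) ^ k = a * (b * a) ^ k * a⁻¹ := by
    rw [show a * b = a * (b * a) * a⁻¹ by group, conj_pow]
  rw [hab, mul_pow_eq_conjProd_mul_pow, commute_iff_eq, eq_comm, mul_inv_eq_iff_eq_mul,
    mul_assoc (conjProd a b k), ← pow_succ, pow_succ', ← mul_assoc, ← mul_assoc, mul_left_inj]

lemma pow_mul_mul_inv_pow_eq {a b : G} {k : ℕ} (h : (b * a) ^ k = (a * b) ^ k) :
    a ^ k * b * (a ^ k)⁻¹ = (conjProd a b k)⁻¹ * b * conjProd a b k := by
  have hc := ((mul_pow_comm_iff_commute_conjProd a b k).1 h).eq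
  have h1 : conjProd a b k * (a ^ k * b * (a ^ k)⁻¹) = b * (a * conjProd a b k * a⁻¹) :=
    conjProd_succ' a b k
  rw [hc, mul_inv_cancel_right] at h1
  calc a ^ k * b * (a ^ k)⁻¹
      = (conjProd a b k)⁻¹ * (conjProd a b k * (a ^ k * b * (a ^ k)⁻¹)) := by group
    _ = (conjProd a b k)⁻¹ * b * conjProd a b k := by rw [h1]; group

end AlternatingProducts

lemma MonoidHom.map_mulAut_zpow {N G : Type*} [Group N] [Group G] (f : N →* G) {σ : MulAut N}
    {τ : MulAut G} (h : ∀ n, f (σ n) = τ (f n)) (z : ℤ) (n : N) :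
    f ((σ ^ z) n) = (τ ^ z) (f n) := by
  have h_inv (n : N) : f (σ⁻¹ n) = τ⁻¹ (f n) := by
    apply τ.injective
    rw [← h]
    simp
  induction z using Int.induction_on generalizing n with
  | zero => rfl
  | succ i ih => rw [zpow_add_one, zpow_add_one, MulAut.mul_apply, MulAut.mul_apply, ih, h]
  | pred i ih => rw [zpow_sub_one, zpow_sub_one, MulAut.mul_apply, MulAut.mul_apply, ih, h_inv]

namespace SemidirectProduct

variable {G N H : Type*} [Group G] [Group N] [Group H] {φ : H →* MulAut N}

noncomputable def equivKerRightHom (e : G ≃* N ⋊[φ] H) :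
    N ≃* (rightHom.comp e.toMonoidHom).ker :=
  (MonoidHom.ofInjective inl_injective).trans <|
    (MulEquiv.subgroupCongr range_inl_eq_ker_rightHom).trans <|
      (e.symm.subgroupMap _).trans <| MulEquiv.subgroupCongr <| by
        rw [Subgroup.map_equiv_eq_comap_symm, MulEquiv.symm_symm, MonoidHom.comap_ker]
        rfl

lemma coe_equivKerRightHom_apply (e : G ≃* N ⋊[φ] H) (n : N) :
    (equivKerRightHom e n : G) = e.symm (inl n) := rfl

end SemidirectProduct

namespace ArtinGraph

variable {W : Type} (Θ : ArtinGraph W) {G : Type*} [Group G]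

lemma map_word (F : FreeGroup W →* G) (u v : W) (n : ℕ) :
    F (word u v n) = altProd (F (FreeGroup.of u)) (F (FreeGroup.of v)) n := by
  induction n generalizing u v with
  | zero => simp [word, altProd]
  | succ n ih => simp [word, altProd, ih]

def lift (f : W → G)
    (hf : ∀ u v, Θ.m u v ≠ 0 → altProd (f u) (f v) (Θ.m u v) = altProd (f v) (f u) (Θ.m u v)) :
    Θ.ArtinGroup →* G :=
  PresentedGroup.toGroup (rels := Θ.rels) (f := f) <| by
    rintro _ ⟨u, v, huv, rfl⟩
    rw [map_mul, map_inv, mul_inv_eq_one, map_word, map_word]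
    simpa only [FreeGroup.lift_apply_of] using hf u v huv

lemma lift_gen (f : W → G) {hf} (v : W) : Θ.lift f hf (Θ.gen v) = f v :=
  PresentedGroup.toGroup.of _

lemma hom_ext {φ ψ : Θ.ArtinGroup →* G} (h : ∀ v, φ (Θ.gen v) = ψ (Θ.gen v)) : φ = ψ :=
  PresentedGroup.ext h

lemma gen_braid (u v : W) :
    altProd (Θ.gen u) (Θ.gen v) (Θ.m u v) = altProd (Θ.gen v) (Θ.gen u) (Θ.m u v) := by
  by_cases huv : Θ.m u v = 0
  · rw [huv]; rfl
  have hr : QuotientGroup.mk' (Subgroup.normalClosure Θ.rels)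
      (word u v (Θ.m u v) * (word v u (Θ.m u v))⁻¹) = 1 :=
    (QuotientGroup.eq_one_iff _).2 (Subgroup.subset_normalClosure ⟨u, v, huv, rfl⟩)
  rwa [map_mul, map_inv, mul_inv_eq_one, map_word, map_word] at hr

lemma gen_mul_gen_pow_half {u v : W} (h : Even (Θ.m u v)) :
    (Θ.gen u * Θ.gen v) ^ (Θ.m u v / 2) = (Θ.gen v * Θ.gen u) ^ (Θ.m u v / 2) := by
  have hb := Θ.gen_braid u v
  obtain ⟨k, hk⟩ := h
  rw [← two_mul] at hk
  rw [hk, altProd_two_mul, altProd_two_mul] at hb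
  rwa [hk, Nat.mul_div_cancel_left k two_pos]

lemma commute_gen_of_m_eq_two {u v : W} (h : Θ.m u v = 2) : Commute (Θ.gen u) (Θ.gen v) :=
  (commute_iff_eq _ _).2 <| by simpa [h] using Θ.gen_mul_gen_pow_half (u := u) (v := v) ⟨1, h⟩

lemma IsEven.div_two_pos {Γ : ArtinGraph W} (hEven : Γ.IsEven) {u v : W}
    (h : Γ.m u v ≠ 0) : 0 < Γ.m u v / 2 := by
  obtain ⟨k, hk⟩ := hEven u v
  omega

lemma IsFC.link_edge {Γ : ArtinGraph W} (hFC : Γ.IsFC) {x u v : W}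
    (hu : Γ.m u x ≠ 0) (hv : Γ.m v x ≠ 0) (huv : Γ.m u v ≠ 0) :
    (Γ.m u v = 2 ∧ (Γ.m u x = 2 ∨ Γ.m v x = 2)) ∨ (Γ.m u x = 2 ∧ Γ.m v x = 2) := by
  rw [Γ.symm u x] at hu ⊢
  rcases hFC u v x huv hv hu with ⟨h, h'⟩ | ⟨h, h'⟩ | ⟨h, h'⟩
  · exact .inl ⟨h, .inr h'⟩
  · exact .inr ⟨h', h⟩
  · exact .inl ⟨h, .inl h'⟩

end ArtinGraph

namespace lkGraph

open ArtinGraph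

variable {V : Type} (Γ : ArtinGraph V) (x : V) {G : Type*} [Group G]

open scoped Classical in
lemma m_apply (p q : {p : V × ℕ // Γ.m p.1 x ≠ 0 ∧ p.2 < Γ.m p.1 x / 2}) :
    (lkGraph Γ x).m p q = if p.1.1 = q.1.1 then 0 else Γ.m p.1.1 q.1.1 := rfl

noncomputable def genAt (v : V) (n : ℕ) : (lkGraph Γ x).ArtinGroup :=
  if h : Γ.m v x ≠ 0 ∧ n < Γ.m v x / 2 then (lkGraph Γ x).gen ⟨(v, n), h⟩ else 1

lemma gen_eq_genAt (p : {p : V × ℕ // Γ.m p.1 x ≠ 0 ∧ p.2 < Γ.m p.1 x / 2}) :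
    (lkGraph Γ x).gen p = genAt Γ x p.1.1 p.1.2 := by
  rw [genAt, dif_pos p.2]

lemma hom_ext {φ ψ : (lkGraph Γ x).ArtinGroup →* G}
    (h : ∀ v n, Γ.m v x ≠ 0 → n < Γ.m v x / 2 → φ (genAt Γ x v n) = ψ (genAt Γ x v n)) :
    φ = ψ :=
  ArtinGraph.hom_ext _ fun p => by rw [gen_eq_genAt]; exact h _ _ p.2.1 p.2.2

variable {Γ x} in
lemma genAt_braid {u v : V} (h : Even (Γ.m u v)) (i j : ℕ) :
    (genAt Γ x u i * genAt Γ x v j) ^ (Γ.m u v / 2) =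
      (genAt Γ x v j * genAt Γ x u i) ^ (Γ.m u v / 2) := by
  by_cases huv : u = v
  · simp [huv, Γ.loopless]
  unfold genAt
  split_ifs with hi hj hj
  · have hb := (lkGraph Γ x).gen_mul_gen_pow_half (u := ⟨(u, i), hi⟩) (v := ⟨(v, j), hj⟩)
      (by rwa [m_apply, if_neg huv])
    rwa [m_apply, if_neg huv] at hb
  all_goals simp

variable {Γ x} in
lemma commute_genAt {u v : V} (h : Γ.m u v = 2) (i j : ℕ) :
    Commute (genAt Γ x u i) (genAt Γ x v j) := by
  have hb := genAt_braid (x := x) (show Even (Γ.m u v) from h ▸ even_two) i j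
  rw [h] at hb
  exact (commute_iff_eq _ _).2 (by simpa using hb)

/-- By the FC condition, an edge of `Δ` has label `2` and a column of height `1` at one end, or
columns of height `1` at both ends; so only these two kinds of relations need checking. -/
noncomputable def lift (hEven : Γ.IsEven) (hFC : Γ.IsFC) (F : V → ℕ → G)
    (hcomm : ∀ u v j, Γ.m u v = 2 → Γ.m u x = 2 → Commute (F u 0) (F v j))
    (hbraid : ∀ u v, Γ.m u v ≠ 0 → Γ.m u x = 2 → Γ.m v x = 2 →
      (F u 0 * F v 0) ^ (Γ.m u v / 2) = (F v 0 * F u 0) ^ (Γ.m u v / 2)) :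
    (lkGraph Γ x).ArtinGroup →* G :=
  (lkGraph Γ x).lift (fun p => F p.1.1 p.1.2) fun p q hpq => by
    obtain ⟨⟨u, i⟩, hu, hi⟩ := p
    obtain ⟨⟨v, j⟩, hv, hj⟩ := q
    have huv : u ≠ v := fun h => hpq (if_pos h)
    simp only [m_apply, if_neg huv] at hpq ⊢
    apply altProd_eq_altProd_of_even (hEven u v)
    rcases hFC.link_edge hu hv hpq with ⟨h2, hux | hvx⟩ | ⟨hux, hvx⟩
    · obtain rfl : i = 0 := by omega
      simpa [h2] using (hcomm u v j h2 hux).eq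
    · obtain rfl : j = 0 := by omega
      simpa [h2] using (hcomm v u i (Γ.symm u v ▸ h2) hvx).eq.symm
    · obtain rfl : i = 0 := by omega
      obtain rfl : j = 0 := by omega
      exact hbraid u v hpq hux hvx

lemma lift_genAt (hEven : Γ.IsEven) (hFC : Γ.IsFC) (F : V → ℕ → G) {hcomm hbraid} {v : V}
    {n : ℕ} (hv : Γ.m v x ≠ 0) (hn : n < Γ.m v x / 2) :
    lift Γ x hEven hFC F hcomm hbraid (genAt Γ x v n) = F v n := by
  rw [genAt, dif_pos ⟨hv, hn⟩]
  exact (lkGraph Γ x).lift_gen _ _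

noncomputable def colProd (v : V) : ℕ → (lkGraph Γ x).ArtinGroup
  | 0 => 1
  | n + 1 => colProd v n * genAt Γ x v n

/-- The wrap-around value comes from `pow_mul_mul_inv_pow_eq` and the braid relation of `v`
and `x`. -/
noncomputable def shiftImage (v : V) (n : ℕ) : (lkGraph Γ x).ArtinGroup :=
  if n + 1 < Γ.m v x / 2 then genAt Γ x v (n + 1)
  else (colProd Γ x v (Γ.m v x / 2))⁻¹ * genAt Γ x v 0 * colProd Γ x v (Γ.m v x / 2)

noncomputable def unshiftImage (v : V) (n : ℕ) : (lkGraph Γ x).ArtinGroup :=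
  if n = 0 then
    colProd Γ x v (Γ.m v x / 2) * genAt Γ x v (Γ.m v x / 2 - 1) * (colProd Γ x v (Γ.m v x / 2))⁻¹
  else genAt Γ x v (n - 1)

variable {Γ x}

lemma shiftImage_of_lt {v : V} {n : ℕ} (h : n + 1 < Γ.m v x / 2) :
    shiftImage Γ x v n = genAt Γ x v (n + 1) :=
  if_pos h

lemma shiftImage_of_le {v : V} {n : ℕ} (h : Γ.m v x / 2 ≤ n + 1) :
    shiftImage Γ x v n =
      (colProd Γ x v (Γ.m v x / 2))⁻¹ * genAt Γ x v 0 * colProd Γ x v (Γ.m v x / 2) :=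
  if_neg h.not_gt

lemma unshiftImage_zero (v : V) :
    unshiftImage Γ x v 0 = colProd Γ x v (Γ.m v x / 2) * genAt Γ x v (Γ.m v x / 2 - 1) *
      (colProd Γ x v (Γ.m v x / 2))⁻¹ :=
  if_pos rfl

lemma unshiftImage_succ (v : V) (n : ℕ) : unshiftImage Γ x v (n + 1) = genAt Γ x v n :=
  if_neg n.succ_ne_zero

lemma commute_genAt_colProd {u v : V} (h : Γ.m u v = 2) (i n : ℕ) :
    Commute (genAt Γ x u i) (colProd Γ x v n) := by
  induction n with
  | zero => exact Commute.one_right _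
  | succ n ih => exact ih.mul_right (commute_genAt h i n)

lemma commute_genAt_shiftImage {u v : V} (h : Γ.m u v = 2) (i n : ℕ) :
    Commute (genAt Γ x u i) (shiftImage Γ x v n) := by
  have hc := commute_genAt_colProd (x := x) h i (Γ.m v x / 2)
  unfold shiftImage
  split_ifs
  exacts [commute_genAt h i _, (hc.inv_right.mul_right (commute_genAt h i 0)).mul_right hc]

lemma commute_genAt_unshiftImage {u v : V} (h : Γ.m u v = 2) (i n : ℕ) :
    Commute (genAt Γ x u i) (unshiftImage Γ x v n) := by
  have hc := commute_genAt_colProd (x := x) h i (Γ.m v x / 2)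
  unfold unshiftImage
  split_ifs
  exacts [(hc.mul_right (commute_genAt h i _)).mul_right hc.inv_right, commute_genAt h i _]

lemma shiftImage_of_m_eq_two {v : V} (h : Γ.m v x = 2) :
    shiftImage Γ x v 0 = genAt Γ x v 0 := by
  simp [shiftImage, h, colProd]

lemma unshiftImage_of_m_eq_two {v : V} (h : Γ.m v x = 2) :
    unshiftImage Γ x v 0 = genAt Γ x v 0 := by
  simp [unshiftImage, h, colProd]

variable (Γ x)

noncomputable def shiftHom (hEven : Γ.IsEven) (hFC : Γ.IsFC) :
    (lkGraph Γ x).ArtinGroup →* (lkGraph Γ x).ArtinGroup :=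
  lift Γ x hEven hFC (shiftImage Γ x)
    (fun _ _ j h hux => shiftImage_of_m_eq_two hux ▸ commute_genAt_shiftImage h 0 j)
    (fun u v _ hux hvx => by
      rw [shiftImage_of_m_eq_two hux, shiftImage_of_m_eq_two hvx]
      exact genAt_braid (hEven u v) 0 0)

noncomputable def unshiftHom (hEven : Γ.IsEven) (hFC : Γ.IsFC) :
    (lkGraph Γ x).ArtinGroup →* (lkGraph Γ x).ArtinGroup :=
  lift Γ x hEven hFC (unshiftImage Γ x)
    (fun _ _ j h hux => unshiftImage_of_m_eq_two hux ▸ commute_genAt_unshiftImage h 0 j)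
    (fun u v _ hux hvx => by
      rw [unshiftImage_of_m_eq_two hux, unshiftImage_of_m_eq_two hvx]
      exact genAt_braid (hEven u v) 0 0)

section Shift

variable (hEven : Γ.IsEven) (hFC : Γ.IsFC) {v : V} (hv : Γ.m v x ≠ 0)
include hv

lemma shiftHom_genAt {n : ℕ} (hn : n < Γ.m v x / 2) :
    shiftHom Γ x hEven hFC (genAt Γ x v n) = shiftImage Γ x v n :=
  lift_genAt Γ x hEven hFC _ hv hn

lemma unshiftHom_genAt {n : ℕ} (hn : n < Γ.m v x / 2) :
    unshiftHom Γ x hEven hFC (genAt Γ x v n) = unshiftImage Γ x v n :=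
  lift_genAt Γ x hEven hFC _ hv hn

lemma shiftHom_colProd_of_lt {n : ℕ} (hn : n < Γ.m v x / 2) :
    shiftHom Γ x hEven hFC (colProd Γ x v n) = (genAt Γ x v 0)⁻¹ * colProd Γ x v (n + 1) := by
  induction n with
  | zero => simp [colProd]
  | succ n ih =>
    rw [colProd, map_mul, ih (by omega), shiftHom_genAt Γ x hEven hFC hv (by omega),
      shiftImage_of_lt hn, mul_assoc]
    rfl

lemma shiftHom_colProd :
    shiftHom Γ x hEven hFC (colProd Γ x v (Γ.m v x / 2)) = colProd Γ x v (Γ.m v x / 2) := by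
  obtain ⟨k, hk⟩ := Nat.exists_eq_add_one_of_ne_zero (hEven.div_two_pos hv).ne'
  rw [hk, colProd, map_mul, shiftHom_colProd_of_lt Γ x hEven hFC hv (by omega),
    shiftHom_genAt Γ x hEven hFC hv (by omega), shiftImage_of_le (by omega), hk, colProd]
  group

lemma unshiftHom_colProd_succ {n : ℕ} (hn : n < Γ.m v x / 2) :
    unshiftHom Γ x hEven hFC (colProd Γ x v (n + 1)) = unshiftImage Γ x v 0 * colProd Γ x v n := by
  induction n with
  | zero => simp [colProd, unshiftHom_genAt Γ x hEven hFC hv hn]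
  | succ n ih =>
    rw [colProd, map_mul, ih (by omega), unshiftHom_genAt Γ x hEven hFC hv hn, unshiftImage_succ,
      mul_assoc]
    rfl

lemma unshiftHom_colProd :
    unshiftHom Γ x hEven hFC (colProd Γ x v (Γ.m v x / 2)) = colProd Γ x v (Γ.m v x / 2) := by
  obtain ⟨k, hk⟩ := Nat.exists_eq_add_one_of_ne_zero (hEven.div_two_pos hv).ne'
  rw [hk, unshiftHom_colProd_succ Γ x hEven hFC hv (by omega), unshiftImage_zero, hk,
    Nat.add_sub_cancel, colProd]
  group

lemma unshiftHom_shiftHom_genAt {n : ℕ} (hn : n < Γ.m v x / 2) :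
    unshiftHom Γ x hEven hFC (shiftHom Γ x hEven hFC (genAt Γ x v n)) = genAt Γ x v n := by
  rw [shiftHom_genAt Γ x hEven hFC hv hn]
  by_cases h : n + 1 < Γ.m v x / 2
  · rw [shiftImage_of_lt h, unshiftHom_genAt Γ x hEven hFC hv h, unshiftImage_succ]
  · rw [shiftImage_of_le (by omega), map_mul, map_mul, map_inv,
      unshiftHom_colProd Γ x hEven hFC hv,
      unshiftHom_genAt Γ x hEven hFC hv (hEven.div_two_pos hv), unshiftImage_zero,
      show Γ.m v x / 2 - 1 = n by omega]
    group

lemma shiftHom_unshiftHom_genAt {n : ℕ} (hn : n < Γ.m v x / 2) :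
    shiftHom Γ x hEven hFC (unshiftHom Γ x hEven hFC (genAt Γ x v n)) = genAt Γ x v n := by
  rw [unshiftHom_genAt Γ x hEven hFC hv hn]
  cases n with
  | zero =>
    rw [unshiftImage_zero, map_mul, map_mul, map_inv, shiftHom_colProd Γ x hEven hFC hv,
      shiftHom_genAt Γ x hEven hFC hv (by omega), shiftImage_of_le (by omega)]
    group
  | succ n =>
    rw [unshiftImage_succ, shiftHom_genAt Γ x hEven hFC hv (by omega), shiftImage_of_lt hn]

end Shift

noncomputable def shift (hEven : Γ.IsEven) (hFC : Γ.IsFC) : MulAut (lkGraph Γ x).ArtinGroup :=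
  MonoidHom.toMulEquiv (shiftHom Γ x hEven hFC) (unshiftHom Γ x hEven hFC)
    (hom_ext Γ x fun _ _ hv hn => unshiftHom_shiftHom_genAt Γ x hEven hFC hv hn)
    (hom_ext Γ x fun _ _ hv hn => shiftHom_unshiftHom_genAt Γ x hEven hFC hv hn)

lemma shift_pow_genAt_zero (hEven : Γ.IsEven) (hFC : Γ.IsFC) {v : V} (hv : Γ.m v x ≠ 0) {n : ℕ}
    (hn : n < Γ.m v x / 2) : (shift Γ x hEven hFC ^ n) (genAt Γ x v 0) = genAt Γ x v n := by
  induction n with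
  | zero => rfl
  | succ n ih =>
    rw [pow_succ', MulAut.mul_apply, ih (by omega)]
    exact (shiftHom_genAt Γ x hEven hFC hv (by omega)).trans (shiftImage_of_lt hn)

section Semidirect

variable (hEven : Γ.IsEven) (hFC : Γ.IsFC)

noncomputable def toArtinGroup : (lkGraph Γ x).ArtinGroup →* Γ.ArtinGroup :=
  lift Γ x hEven hFC (fun v n => Γ.gen x ^ n * Γ.gen v * (Γ.gen x ^ n)⁻¹)
    (fun u v j huv hux => by
      have hx := (Γ.commute_gen_of_m_eq_two hux).pow_right j
      simpa using (hx.mul_right (Γ.commute_gen_of_m_eq_two huv)).mul_right hx.inv_right)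
    (fun u v _ _ _ => by simpa using Γ.gen_mul_gen_pow_half (hEven u v))

lemma toArtinGroup_gen (p : {p : V × ℕ // Γ.m p.1 x ≠ 0 ∧ p.2 < Γ.m p.1 x / 2}) :
    toArtinGroup Γ x hEven hFC ((lkGraph Γ x).gen p) =
      Γ.gen x ^ p.1.2 * Γ.gen p.1.1 * (Γ.gen x ^ p.1.2)⁻¹ := by
  rw [gen_eq_genAt]
  exact lift_genAt Γ x hEven hFC _ p.2.1 p.2.2

section Column

variable {Γ x} {v : V} (hv : Γ.m v x ≠ 0)
include hv

lemma toArtinGroup_genAt {n : ℕ} (hn : n < Γ.m v x / 2) :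
    toArtinGroup Γ x hEven hFC (genAt Γ x v n) = Γ.gen x ^ n * Γ.gen v * (Γ.gen x ^ n)⁻¹ :=
  lift_genAt Γ x hEven hFC _ hv hn

lemma toArtinGroup_colProd {n : ℕ} (hn : n ≤ Γ.m v x / 2) :
    toArtinGroup Γ x hEven hFC (colProd Γ x v n) = conjProd (Γ.gen x) (Γ.gen v) n := by
  induction n with
  | zero => exact map_one _
  | succ n ih =>
    rw [colProd, map_mul, ih (by omega), toArtinGroup_genAt hEven hFC hv (by omega)]
    rfl

end Column

lemma toArtinGroup_shift (d : (lkGraph Γ x).ArtinGroup) :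
    toArtinGroup Γ x hEven hFC (shift Γ x hEven hFC d) =
      MulAut.conj (Γ.gen x) (toArtinGroup Γ x hEven hFC d) := by
  suffices (toArtinGroup Γ x hEven hFC).comp (shiftHom Γ x hEven hFC) =
      (MulAut.conj (Γ.gen x)).toMonoidHom.comp (toArtinGroup Γ x hEven hFC) from
    DFunLike.congr_fun this d
  refine hom_ext Γ x fun v n hv hn => ?_
  simp only [MonoidHom.comp_apply, MulEquiv.coe_toMonoidHom, MulAut.conj_apply,
    shiftHom_genAt Γ x hEven hFC hv hn, toArtinGroup_genAt hEven hFC hv hn]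
  by_cases h : n + 1 < Γ.m v x / 2
  · rw [shiftImage_of_lt h, toArtinGroup_genAt hEven hFC hv h]
    group
  · rw [shiftImage_of_le (by omega), map_mul, map_mul, map_inv,
      toArtinGroup_colProd hEven hFC hv le_rfl,
      toArtinGroup_genAt hEven hFC hv (hEven.div_two_pos hv), pow_zero, inv_one, mul_one,
      one_mul, ← pow_mul_mul_inv_pow_eq (Γ.gen_mul_gen_pow_half (hEven v x)),
      show Γ.m v x / 2 = n + 1 by omega]
    group

noncomputable def shiftAction : Multiplicative ℤ →* MulAut (lkGraph Γ x).ArtinGroup :=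
  zpowersHom _ (shift Γ x hEven hFC)

lemma shiftAction_ofAdd_one : shiftAction Γ x hEven hFC (.ofAdd 1) = shift Γ x hEven hFC := by
  simp [shiftAction]

lemma toArtinGroup_comp_shiftAction (z : Multiplicative ℤ) :
    (toArtinGroup Γ x hEven hFC).comp (shiftAction Γ x hEven hFC z).toMonoidHom =
      (MulAut.conj (zpowersHom _ (Γ.gen x) z)).toMonoidHom.comp (toArtinGroup Γ x hEven hFC) := by
  ext d
  simpa [shiftAction, map_zpow] using
    (toArtinGroup Γ x hEven hFC).map_mulAut_zpow (toArtinGroup_shift Γ x hEven hFC) z.toAdd d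

open SemidirectProduct

section Column

variable {Γ x} {v : V} (hv : Γ.m v x ≠ 0)
include hv

lemma conjProd_inr_inl_genAt {n : ℕ} (hn : n ≤ Γ.m v x / 2) :
    conjProd (inr (.ofAdd 1)) (inl (genAt Γ x v 0)) n =
      (inl (colProd Γ x v n) : (lkGraph Γ x).ArtinGroup ⋊[shiftAction Γ x hEven hFC] _) := by
  induction n with
  | zero => exact map_one _ |>.symm
  | succ n ih =>
    rw [conjProd, ih (by omega), ← map_pow, ← map_inv, ← inl_aut, map_pow,
      shiftAction_ofAdd_one, shift_pow_genAt_zero Γ x hEven hFC hv (by omega),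
      ← map_mul]
    rfl

/-- Holds because the shift fixes `colProd Γ x v (m_{v,x} / 2)`. -/
lemma inl_genAt_mul_inr_pow :
    ((inl (genAt Γ x v 0) : (lkGraph Γ x).ArtinGroup ⋊[shiftAction Γ x hEven hFC] _) *
        inr (.ofAdd 1)) ^ (Γ.m v x / 2) =
      (inr (.ofAdd 1) * inl (genAt Γ x v 0)) ^ (Γ.m v x / 2) := by
  rw [mul_pow_comm_iff_commute_conjProd, conjProd_inr_inl_genAt hEven hFC hv le_rfl, Commute,
    SemiconjBy, ← mul_inv_eq_iff_eq_mul, ← map_inv, ← inl_aut, shiftAction_ofAdd_one]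
  exact congrArg inl (shiftHom_colProd Γ x hEven hFC hv)

end Column

end Semidirect

end lkGraph

namespace ArtinGraph

open SemidirectProduct lkGraph

variable {V : Type} (Γ : ArtinGraph V) (x : V) (hEven : Γ.IsEven) (hFC : Γ.IsFC)

open scoped Classical in
noncomputable def toSemidirect :
    Γ.ArtinGroup →* (lkGraph Γ x).ArtinGroup ⋊[shiftAction Γ x hEven hFC] Multiplicative ℤ :=
  Γ.lift (fun v => if v = x then inr (.ofAdd 1) else inl (genAt Γ x v 0)) fun u v huv => by
    refine altProd_eq_altProd_of_even (hEven u v) ?_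
    have hne : u ≠ v := by rintro rfl; exact huv (Γ.loopless u)
    by_cases hux : u = x
    · subst hux
      rw [if_pos rfl, if_neg hne.symm, Γ.symm]
      exact (inl_genAt_mul_inr_pow hEven hFC (Γ.symm u v ▸ huv)).symm
    by_cases hvx : v = x
    · subst hvx
      rw [if_pos rfl, if_neg hux]
      exact inl_genAt_mul_inr_pow hEven hFC huv
    rw [if_neg hux, if_neg hvx, ← map_mul, ← map_mul, ← map_pow, ← map_pow,
      genAt_braid (hEven u v)]

lemma toSemidirect_gen_self : toSemidirect Γ x hEven hFC (Γ.gen x) = inr (.ofAdd 1) :=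
  (Γ.lift_gen _ x).trans (if_pos rfl)

lemma toSemidirect_gen_of_ne {v : V} (hv : v ≠ x) :
    toSemidirect Γ x hEven hFC (Γ.gen v) = inl (genAt Γ x v 0) :=
  (Γ.lift_gen _ v).trans (if_neg hv)

noncomputable def ofSemidirect :
    (lkGraph Γ x).ArtinGroup ⋊[shiftAction Γ x hEven hFC] Multiplicative ℤ →* Γ.ArtinGroup :=
  SemidirectProduct.lift (toArtinGroup Γ x hEven hFC) (zpowersHom _ (Γ.gen x))
    (toArtinGroup_comp_shiftAction Γ x hEven hFC)

lemma ofSemidirect_inl (d : (lkGraph Γ x).ArtinGroup) :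
    ofSemidirect Γ x hEven hFC (inl d) = toArtinGroup Γ x hEven hFC d :=
  SemidirectProduct.lift_inl _ _ (toArtinGroup_comp_shiftAction Γ x hEven hFC) d

lemma ofSemidirect_inr (z : Multiplicative ℤ) :
    ofSemidirect Γ x hEven hFC (inr z) = Γ.gen x ^ z.toAdd :=
  SemidirectProduct.lift_inr _ _ (toArtinGroup_comp_shiftAction Γ x hEven hFC) z

lemma toSemidirect_comp_ofSemidirect :
    (toSemidirect Γ x hEven hFC).comp (ofSemidirect Γ x hEven hFC) = MonoidHom.id _ := by
  refine SemidirectProduct.hom_ext (lkGraph.hom_ext Γ x fun v n hv hn => ?_) ?_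
  · have hvx : v ≠ x := by rintro rfl; exact hv (Γ.loopless v)
    simp only [MonoidHom.comp_apply, MonoidHom.id_apply, ofSemidirect_inl,
      toArtinGroup_genAt hEven hFC hv hn]
    rw [map_mul, map_mul, map_inv, map_pow, toSemidirect_gen_self,
      toSemidirect_gen_of_ne Γ x hEven hFC hvx, ← map_pow, ← map_inv, ← inl_aut, map_pow,
      shiftAction_ofAdd_one, shift_pow_genAt_zero Γ x hEven hFC hv hn]
  · refine MonoidHom.ext_mint ?_
    simp only [MonoidHom.comp_apply, MonoidHom.id_apply, ofSemidirect_inr, toAdd_ofAdd,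
      zpow_one, toSemidirect_gen_self]

lemma m_ne_zero_of_star_eq_univ (hst : Γ.star x = Set.univ) {v : V} (hvx : v ≠ x) :
    Γ.m v x ≠ 0 := by
  have hv : v ∈ Γ.star x := hst ▸ Set.mem_univ v
  rw [Γ.symm]
  exact hv.resolve_left hvx

lemma ofSemidirect_comp_toSemidirect (hst : Γ.star x = Set.univ) :
    (ofSemidirect Γ x hEven hFC).comp (toSemidirect Γ x hEven hFC) = MonoidHom.id _ := by
  refine Γ.hom_ext fun v => ?_
  simp only [MonoidHom.comp_apply, MonoidHom.id_apply]
  by_cases hvx : v = x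
  · rw [hvx, toSemidirect_gen_self, ofSemidirect_inr, toAdd_ofAdd, zpow_one]
  · have hv := m_ne_zero_of_star_eq_univ Γ x hst hvx
    rw [toSemidirect_gen_of_ne Γ x hEven hFC hvx, ofSemidirect_inl,
      toArtinGroup_genAt hEven hFC hv (hEven.div_two_pos hv)]
    group

noncomputable def semidirectEquiv (hst : Γ.star x = Set.univ) :
    Γ.ArtinGroup ≃* (lkGraph Γ x).ArtinGroup ⋊[shiftAction Γ x hEven hFC] Multiplicative ℤ :=
  MonoidHom.toMulEquiv (toSemidirect Γ x hEven hFC) (ofSemidirect Γ x hEven hFC)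
    (ofSemidirect_comp_toSemidirect Γ x hEven hFC hst)
    (toSemidirect_comp_ofSemidirect Γ x hEven hFC)

lemma semidirectEquiv_symm_inl (hst : Γ.star x = Set.univ) (d : (lkGraph Γ x).ArtinGroup) :
    (semidirectEquiv Γ x hEven hFC hst).symm (inl d) = toArtinGroup Γ x hEven hFC d :=
  ofSemidirect_inl Γ x hEven hFC d

end ArtinGraph

open ArtinGraph in
/-- if `Γ` is even FC-type and `st(x) = V`, the kernel of the
retraction `ρ_x : G_Γ → ⟨x⟩ ≅ ℤ` is isomorphic to the Artin group of `lkGraph`,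
via `(v, n) ↦ xⁿ v x⁻ⁿ`. -/
theorem stmt11 {V : Type} (Γ : ArtinGraph V) (hEven : Γ.IsEven) (hFC : Γ.IsFC)
    (x : V) (hst : Γ.star x = Set.univ)
    (ρ : Γ.ArtinGroup →* Multiplicative ℤ)
    (hρx : ρ (Γ.gen x) = Multiplicative.ofAdd 1)
    (hρv : ∀ v, v ≠ x → ρ (Γ.gen v) = 1) :
    ∃ e : (lkGraph Γ x).ArtinGroup ≃* ρ.ker,
      ∀ p, ((e ((lkGraph Γ x).gen p) : ρ.ker) : Γ.ArtinGroup) =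
        (Γ.gen x) ^ p.val.2 * Γ.gen p.val.1 * ((Γ.gen x) ^ p.val.2)⁻¹ := by
  obtain rfl :
      ρ = SemidirectProduct.rightHom.comp (semidirectEquiv Γ x hEven hFC hst).toMonoidHom :=
    Γ.hom_ext fun v => by
      change ρ (Γ.gen v) = SemidirectProduct.rightHom (toSemidirect Γ x hEven hFC (Γ.gen v))
      by_cases hvx : v = x
      · rw [hvx, toSemidirect_gen_self, SemidirectProduct.rightHom_inr, hρx]
      · rw [toSemidirect_gen_of_ne Γ x hEven hFC hvx, SemidirectProduct.rightHom_inl, hρv v hvx]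
  refine ⟨SemidirectProduct.equivKerRightHom _, fun p => ?_⟩
  rw [SemidirectProduct.coe_equivKerRightHom_apply, semidirectEquiv_symm_inl]
  exact lkGraph.toArtinGroup_gen Γ x hEven hFC p
end
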